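/- arXiv:2112.05359 — 2 statements merged into one kernel-verified Lean document; each statement's English description precedes it below -/
import Mathlib

section
/- Let B ∈ ℝ^{m×n}, V ∈ ℝ^{n×p}, and let S be a sub-sampling matrix with d i.i.d. columns and probabilities p_i > 0 summing to 1. Then E[‖BV − B S Sᵀ V‖_F²] = (1/d) (Σ_{i=1}^n ‖B^{(i)}‖₂² ‖V_{(i)}‖₂² / p_i − ‖BV‖_F²), where B^{(i)} is the i-th column of B and V_{(i)} the i-th row of V. -/
open Matrix BigOperators

/-- Sub-sampling sketching matrix determined by a choice of column indices
`c : Fin d → Fin n`: the `k`-th column is `(1/√(d p (c k))) e_{c k}`. -/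
noncomputable def subSampleMatrix (n d : ℕ) (p : Fin n → ℝ) (c : Fin d → Fin n) :
    Matrix (Fin n) (Fin d) ℝ :=
  fun i k => if c k = i then 1 / Real.sqrt (d * p i) else 0

/-- Squared Frobenius norm of a matrix. -/
def frobSq {m q : ℕ} (M : Matrix (Fin m) (Fin q) ℝ) : ℝ :=
  ∑ a, ∑ b, (M a b) ^ 2

/-!
Entry `(a, b)` of `B S Sᵀ V` is the average of `d` independent copies of the unbiased estimator
`X = B a i * V i b / p i` (with `i ~ p`) of `(B V) a b`. Cross terms of independent centred
samples vanish, so its mean squared error is `Var X / d = (E X² - ((B V) a b)²) / d`, and summing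
over the entries gives the formula.
-/

namespace IIDSample

variable {κ α : Type*} [Fintype κ] [DecidableEq κ] [Fintype α] {p : α → ℝ}

/-- Expectation under the law of a family of independent samples `c k`, each distributed as `p`. -/
def expect (p : α → ℝ) (F : (κ → α) → ℝ) : ℝ :=
  ∑ c : κ → α, (∏ k, p (c k)) * F c

lemma expect_sum {ι : Type*} (s : Finset ι) (F : ι → (κ → α) → ℝ) :
    expect p (fun c => ∑ j ∈ s, F j c) = ∑ j ∈ s, expect p (F j) := by
  simp only [expect, Finset.mul_sum]
  exact Finset.sum_comm

lemma expect_const_mul (r : ℝ) (F : (κ → α) → ℝ) :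
    expect p (fun c => r * F c) = r * expect p F := by
  simp only [expect, Finset.mul_sum]
  exact Finset.sum_congr rfl fun c _ => by ring

lemma expect_prod_apply (hp : ∑ i, p i = 1) (f : α → ℝ) (s : Finset κ) :
    expect p (fun c => ∏ k ∈ s, f (c k)) = (∑ i, p i * f i) ^ s.card := by
  have hprod (c : κ → α) : (∏ k, p (c k)) * ∏ k ∈ s, f (c k)
      = ∏ k, p (c k) * (if k ∈ s then f (c k) else 1) := by
    rw [Finset.prod_mul_distrib, Finset.prod_ite_mem, Finset.univ_inter]
  have hfactor (k : κ) : ∑ i, p i * (if k ∈ s then f i else 1)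
      = if k ∈ s then ∑ i, p i * f i else 1 := by
    split_ifs <;> simp [hp]
  simp only [expect, hprod]
  rw [← Fintype.prod_sum (fun k i => p i * (if k ∈ s then f i else 1))]
  simp only [hfactor, Finset.prod_ite_mem, Finset.univ_inter, Finset.prod_const]

lemma expect_apply (hp : ∑ i, p i = 1) (f : α → ℝ) (k : κ) :
    expect p (fun c => f (c k)) = ∑ i, p i * f i := by
  simpa using expect_prod_apply hp f {k}

lemma expect_apply_mul_apply_of_centered (hp : ∑ i, p i = 1) {f : α → ℝ}
    (hf : ∑ i, p i * f i = 0) (k l : κ) :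
    expect p (fun c => f (c k) * f (c l)) = if k = l then ∑ i, p i * f i ^ 2 else 0 := by
  split_ifs with hkl
  · subst hkl
    simpa only [← sq] using expect_apply hp (fun i => f i ^ 2) k
  · simpa [Finset.prod_pair hkl, hf] using expect_prod_apply hp f {k, l}

lemma expect_sum_sq_of_centered (hp : ∑ i, p i = 1) {f : α → ℝ}
    (hf : ∑ i, p i * f i = 0) :
    expect p (fun c : κ → α => (∑ k, f (c k)) ^ 2)
      = Fintype.card κ * ∑ i, p i * f i ^ 2 := by
  simp only [sq, Finset.sum_mul_sum, expect_sum, expect_apply_mul_apply_of_centered hp hf,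
    Finset.sum_ite_eq, Finset.mem_univ, if_true, Finset.sum_const, Finset.card_univ,
    nsmul_eq_mul]

lemma sum_mul_sub_sq (hp : ∑ i, p i = 1) (f : α → ℝ) :
    ∑ i, p i * (f i - ∑ j, p j * f j) ^ 2 = ∑ i, p i * f i ^ 2 - (∑ i, p i * f i) ^ 2 := by
  set μ := ∑ j, p j * f j
  have : ∀ i, p i * (f i - μ) ^ 2 = p i * f i ^ 2 - 2 * μ * (p i * f i) + μ ^ 2 * p i :=
    fun i => by ring
  simp only [this, Finset.sum_add_distrib, Finset.sum_sub_distrib, ← Finset.mul_sum, hp]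
  ring

lemma expect_sq_mean_sub_avg [Nonempty κ] (hp : ∑ i, p i = 1) (f : α → ℝ) :
    expect p (fun c : κ → α =>
        (∑ i, p i * f i - (Fintype.card κ : ℝ)⁻¹ * ∑ k, f (c k)) ^ 2)
      = (Fintype.card κ : ℝ)⁻¹ * (∑ i, p i * f i ^ 2 - (∑ i, p i * f i) ^ 2) := by
  have hvar := sum_mul_sub_sq hp f
  set μ := ∑ i, p i * f i
  set d : ℝ := (Fintype.card κ : ℝ)
  have hd : d ≠ 0 := Nat.cast_ne_zero.mpr Fintype.card_ne_zero
  have hcenter : ∑ i, p i * (f i - μ) = 0 := by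
    simp only [mul_sub, Finset.sum_sub_distrib, ← Finset.sum_mul, hp, one_mul, sub_self, μ]
  have hdev (c : κ → α) :
      (μ - d⁻¹ * ∑ k, f (c k)) ^ 2 = (d ^ 2)⁻¹ * (∑ k, (f (c k) - μ)) ^ 2 := by
    simp only [Finset.sum_sub_distrib, Finset.sum_const, Finset.card_univ, nsmul_eq_mul, d]
    field_simp
    ring
  simp only [hdev, expect_const_mul, expect_sum_sq_of_centered hp hcenter, hvar]
  field_simp
  rfl

end IIDSample

open IIDSample

section SubSample

variable {m n q d : ℕ} {p : Fin n → ℝ} (c : Fin d → Fin n)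

lemma mul_subSampleMatrix_apply (B : Matrix (Fin m) (Fin n) ℝ) (a : Fin m) (k : Fin d) :
    (B * subSampleMatrix n d p c) a k = B a (c k) / √(d * p (c k)) := by
  simp [subSampleMatrix, Matrix.mul_apply, div_eq_mul_inv]

lemma transpose_subSampleMatrix_mul_apply (V : Matrix (Fin n) (Fin q) ℝ) (k : Fin d) (b : Fin q) :
    ((subSampleMatrix n d p c)ᵀ * V) k b = V (c k) b / √(d * p (c k)) := by
  simp [subSampleMatrix, Matrix.mul_apply, div_eq_mul_inv, mul_comm]

lemma mul_subSampleMatrix_mul_transpose_mul_apply (hp : ∀ i, 0 ≤ p i)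
    (B : Matrix (Fin m) (Fin n) ℝ) (V : Matrix (Fin n) (Fin q) ℝ) (a : Fin m) (b : Fin q) :
    (B * subSampleMatrix n d p c * (subSampleMatrix n d p c)ᵀ * V) a b
      = (d : ℝ)⁻¹ * ∑ k, B a (c k) * V (c k) b / p (c k) := by
  rw [Matrix.mul_assoc, Matrix.mul_apply, Finset.mul_sum]
  refine Finset.sum_congr rfl fun k _ => ?_
  rw [mul_subSampleMatrix_apply, transpose_subSampleMatrix_mul_apply, div_mul_div_comm,
    ← sq, Real.sq_sqrt (mul_nonneg d.cast_nonneg (hp _))]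
  field_simp

end SubSample

lemma sum_sum_sum_mul_div_sq {m n q : ℕ} (B : Matrix (Fin m) (Fin n) ℝ)
    (V : Matrix (Fin n) (Fin q) ℝ) {p : Fin n → ℝ} (hp : ∀ i, p i ≠ 0) :
    ∑ a, ∑ b, ∑ i, p i * (B a i * V i b / p i) ^ 2
      = ∑ i, (∑ a, B a i ^ 2) * (∑ b, V i b ^ 2) / p i := by
  have h (a : Fin m) (i : Fin n) (b : Fin q) :
      p i * (B a i * V i b / p i) ^ 2 = B a i ^ 2 * V i b ^ 2 / p i := by
    field_simp [hp i]
  simp only [h]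
  rw [Finset.sum_comm_cycle]
  simp only [Finset.sum_mul_sum, Finset.sum_div]

/-- Exact expected squared Frobenius error of the sub-sampling sketch:
`E[‖BV − B S Sᵀ V‖_F²] = (1/d) (∑ᵢ ‖B^{(i)}‖₂² ‖V_{(i)}‖₂² / pᵢ − ‖BV‖_F²)`. -/
theorem expected_frobenius_error_subSample (m n q d : ℕ) (hd : 0 < d)
    (B : Matrix (Fin m) (Fin n) ℝ) (V : Matrix (Fin n) (Fin q) ℝ)
    (p : Fin n → ℝ) (hp : ∀ i, 0 < p i) (hsum : ∑ i, p i = 1) :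
    (∑ c : Fin d → Fin n, (∏ k, p (c k)) *
        frobSq (B * V - B * subSampleMatrix n d p c * (subSampleMatrix n d p c)ᵀ * V))
      = (1 / d) *
        ((∑ i, (∑ a, (B a i) ^ 2) * (∑ b, (V i b) ^ 2) / p i) - frobSq (B * V)) := by
  have : Nonempty (Fin d) := ⟨⟨0, hd⟩⟩
  set f : Fin m → Fin q → Fin n → ℝ := fun a b i => B a i * V i b / p i
  have hmean (a b) : (B * V) a b = ∑ i, p i * f a b i := by
    simp only [Matrix.mul_apply, f, mul_div_cancel₀ _ (hp _).ne']
  calc _ = ∑ a, ∑ b, expect p (fun c : Fin d → Fin n =>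
          (∑ i, p i * f a b i - (d : ℝ)⁻¹ * ∑ k, f a b (c k)) ^ 2) := by
        simp only [frobSq, Matrix.sub_apply, mul_subSampleMatrix_mul_transpose_mul_apply _
          (fun i => (hp i).le), ← hmean, ← expect_sum]
        rfl
    _ = ∑ a, ∑ b, (d : ℝ)⁻¹ * (∑ i, p i * f a b i ^ 2 - (∑ i, p i * f a b i) ^ 2) := by
        refine Finset.sum_congr rfl fun a _ => Finset.sum_congr rfl fun b _ => ?_
        simpa only [Fintype.card_fin] using expect_sq_mean_sub_avg (κ := Fin d) hsum (f a b)
    _ = _ := by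
        simp only [← hmean, f, ← Finset.mul_sum, Finset.sum_sub_distrib,
          sum_sum_sum_mul_div_sq B V (fun i => (hp i).ne'), frobSq, one_div]
end

section
/- For matrices B ∈ ℝ^{m×n} and V ∈ ℝ^{n×p} with single-sample (d = 1) sub-sampling probabilities chosen proportional to ‖B^{(i)}‖₂ ‖V_{(i)}‖₂ (assuming all these products are positive), the expected squared Frobenius error E[‖BV − B S Sᵀ V‖_F²] equals (Σ_{i=1}^n ‖B^{(i)}‖₂ ‖V_{(i)}‖₂)² − ‖BV‖_F², and these probabilities minimize the expected squared Frobenius error over all probability vectors. -/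
open Matrix BigOperators

/-- Expected squared Frobenius error of the single-sample (`d = 1`) sub-sampling
sketch with sampling probabilities `q`. -/
noncomputable def singleSampleErr {m n p : ℕ} (B : Matrix (Fin m) (Fin n) ℝ)
    (V : Matrix (Fin n) (Fin p) ℝ) (q : Fin n → ℝ) : ℝ :=
  ∑ i, q i *
    frobSq (B * V -
      B * subSampleMatrix n 1 q (fun _ => i) * (subSampleMatrix n 1 q (fun _ => i))ᵀ * V)

/-! For the sampled index `i`, the sketch `B S Sᵀ V` is the rank-one matrix `B^{(i)} V_{(i)} / q_i`,
and these rank-one matrices average (under `q`) to `BV`. Expanding the square therefore gives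
`E = ∑ᵢ ‖B^{(i)}‖² ‖V_{(i)}‖² / q_i − ‖BV‖_F²` for every probability vector `q`. By Sedrakyan's
form of Cauchy–Schwarz the sum is at least `(∑ᵢ ‖B^{(i)}‖ ‖V_{(i)}‖)²`, with equality for `q`
proportional to `‖B^{(i)}‖ ‖V_{(i)}‖`. -/

open Finset

theorem mul_subSampleMatrix_mul_transpose_mul {m n k : ℕ} (B : Matrix (Fin m) (Fin n) ℝ)
    (V : Matrix (Fin n) (Fin k) ℝ) {q : Fin n → ℝ} {i : Fin n} (hq : 0 ≤ q i) :
    B * subSampleMatrix n 1 q (fun _ => i) * (subSampleMatrix n 1 q (fun _ => i))ᵀ * V =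
      (q i)⁻¹ • vecMulVec (Bᵀ i) (V i) := by
  ext a b
  simp only [mul_apply, transpose_apply, subSampleMatrix, Fin.sum_univ_one, mul_ite, ite_mul,
    mul_zero, zero_mul, sum_ite_eq, mem_univ, if_true, Matrix.smul_apply, smul_eq_mul,
    vecMulVec_apply, Nat.cast_one, one_mul, one_div]
  have hinv : (√(q i))⁻¹ * (√(q i))⁻¹ = (q i)⁻¹ := by rw [← mul_inv, Real.mul_self_sqrt hq]
  linear_combination B a i * V i b * hinv

theorem sum_vecMulVec_transpose_eq_mul {m n k : ℕ} (B : Matrix (Fin m) (Fin n) ℝ)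
    (V : Matrix (Fin n) (Fin k) ℝ) : ∑ i, vecMulVec (Bᵀ i) (V i) = B * V := by
  ext a b
  simp only [Matrix.sum_apply, vecMulVec_apply, transpose_apply, mul_apply]

theorem frobSq_sub_smul {m k : ℕ} (M N : Matrix (Fin m) (Fin k) ℝ) (c : ℝ) :
    frobSq (M - c • N) = frobSq M - 2 * c * ∑ a, ∑ b, M a b * N a b + c ^ 2 * frobSq N := by
  simp only [frobSq, Matrix.sub_apply, Matrix.smul_apply, smul_eq_mul, mul_sum, ← sum_sub_distrib,
    ← sum_add_distrib]
  congr! 2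
  ring

theorem frobSq_vecMulVec {m k : ℕ} (w : Fin m → ℝ) (v : Fin k → ℝ) :
    frobSq (vecMulVec w v) = (∑ a, w a ^ 2) * ∑ b, v b ^ 2 := by
  simp only [frobSq, vecMulVec_apply, mul_pow, sum_mul_sum]

theorem singleSampleErr_eq {m n k : ℕ} (B : Matrix (Fin m) (Fin n) ℝ)
    (V : Matrix (Fin n) (Fin k) ℝ) {q : Fin n → ℝ} (hq : ∀ i, 0 < q i) :
    singleSampleErr B V q = (∑ i, q i - 2) * frobSq (B * V) +
      ∑ i, (∑ a, B a i ^ 2) * (∑ b, V i b ^ 2) / q i := by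
  have hterm : ∀ i, q i * frobSq (B * V - (q i)⁻¹ • vecMulVec (Bᵀ i) (V i)) =
      q i * frobSq (B * V) - 2 * ∑ a, ∑ b, (B * V) a b * vecMulVec (Bᵀ i) (V i) a b +
        (∑ a, B a i ^ 2) * (∑ b, V i b ^ 2) / q i := by
    intro i
    rw [frobSq_sub_smul, frobSq_vecMulVec]
    simp only [transpose_apply]
    field_simp [(hq i).ne']
  have hcross : ∑ i, ∑ a, ∑ b, (B * V) a b * vecMulVec (Bᵀ i) (V i) a b = frobSq (B * V) := by
    have hsq : ∀ a b, (B * V) a b ^ 2 = ∑ i, (B * V) a b * vecMulVec (Bᵀ i) (V i) a b := by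
      intro a b
      rw [sq, ← mul_sum, ← Matrix.sum_apply, sum_vecMulVec_transpose_eq_mul]
    simp only [frobSq, hsq]
    rw [sum_comm]
    exact sum_congr rfl fun a _ => sum_comm
  simp only [singleSampleErr, mul_subSampleMatrix_mul_transpose_mul B V (hq _).le, hterm,
    sum_add_distrib, sum_sub_distrib, ← mul_sum, ← sum_mul, hcross]
  ring

theorem sum_sq_div_div_sum {ι K : Type*} [Field K] (s : Finset ι) (f : ι → K) :
    ∑ i ∈ s, f i ^ 2 / (f i / ∑ j ∈ s, f j) = (∑ i ∈ s, f i) ^ 2 := by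
  have hterm : ∀ x y : K, x ^ 2 / (x / y) = x * y := by
    intro x y
    rcases eq_or_ne x 0 with rfl | hx
    · simp
    rcases eq_or_ne y 0 with rfl | hy
    · simp
    field_simp
  simp_rw [hterm]
  rw [← sum_mul, sq]

/-- With `d = 1` and probabilities proportional to `‖B^{(i)}‖₂ ‖V_{(i)}‖₂`
(all positive), the expected squared Frobenius error equals
`(∑ᵢ ‖B^{(i)}‖₂ ‖V_{(i)}‖₂)² − ‖BV‖_F²`, and these probabilities minimize the expected
squared Frobenius error over all probability vectors. -/
theorem optimal_single_sample_probabilities (m n pdim : ℕ)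
    (B : Matrix (Fin m) (Fin n) ℝ) (V : Matrix (Fin n) (Fin pdim) ℝ)
    (hpos : ∀ i : Fin n,
      0 < Real.sqrt (∑ a, (B a i) ^ 2) * Real.sqrt (∑ b, (V i b) ^ 2))
    (p : Fin n → ℝ)
    (hp : ∀ i, p i = Real.sqrt (∑ a, (B a i) ^ 2) * Real.sqrt (∑ b, (V i b) ^ 2) /
      (∑ i', Real.sqrt (∑ a, (B a i') ^ 2) * Real.sqrt (∑ b, (V i' b) ^ 2))) :
    singleSampleErr B V p =
      (∑ i, Real.sqrt (∑ a, (B a i) ^ 2) * Real.sqrt (∑ b, (V i b) ^ 2)) ^ 2 -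
        frobSq (B * V) ∧
    ∀ q : Fin n → ℝ, (∀ i, 0 < q i) → (∑ i, q i) = 1 →
      singleSampleErr B V p ≤ singleSampleErr B V q := by
  set s : Fin n → ℝ := fun i => √(∑ a, B a i ^ 2) * √(∑ b, V i b ^ 2)
  have hp_eq : p = fun i => s i / ∑ j, s j := funext hp
  have hs_sq : ∀ i, (∑ a, B a i ^ 2) * (∑ b, V i b ^ 2) = s i ^ 2 := fun i => by
    rw [mul_pow, Real.sq_sqrt (by positivity), Real.sq_sqrt (by positivity)]
  rcases isEmpty_or_nonempty (Fin n) with _ | _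
  · simp [singleSampleErr, frobSq, mul_apply]
  have hT : 0 < ∑ j, s j := sum_pos (fun i _ => hpos i) univ_nonempty
  have herr : ∀ q : Fin n → ℝ, (∀ i, 0 < q i) → ∑ i, q i = 1 →
      singleSampleErr B V q = ∑ i, s i ^ 2 / q i - frobSq (B * V) := fun q hq hq1 => by
    simp only [singleSampleErr_eq B V hq, hq1, hs_sq]
    ring
  have hp_err : singleSampleErr B V p = (∑ i, s i) ^ 2 - frobSq (B * V) := by
    rw [herr p (fun i => hp i ▸ div_pos (hpos i) hT) (by rw [hp_eq, ← sum_div, div_self hT.ne']),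
      hp_eq, sum_sq_div_div_sum]
  refine ⟨hp_err, fun q hq hq1 => ?_⟩
  have hTitu := sq_sum_div_le_sum_sq_div univ s fun i _ => hq i
  rw [hq1, div_one] at hTitu
  rw [hp_err, herr q hq hq1]
  linarith
end
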